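/- Let C₁, …, C_m, C be nonempty finite subsets of a vector space E over an arbitrary field. Suppose there exist linearly independent vectors c₁ ∈ C₁, …, c_m ∈ C_m, suppose the augmented family C₁, …, C_m, C is degenerate, and let V = span{c₁, …, c_m}. Fix 0 < l ≤ m, suppose Cᵢ ⊆ V for every i ≤ l and Cᵢ ⊄ V for every i > l, and let Q = span{c₁, …, c_l}. If for some index i ≤ l the set Cᵢ is not contained in Q, then the linear span L of C is contained in the subspace Qᵢ = span{c₁, …, c_{i−1}, c_{i+1}, …, c_l}. -/

import Mathlib

/-!
By degeneracy, every linearly independent choice `e` from `C₁, …, C_m` has each `x ∈ C` in its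
span. If `C_k ⊄ V`, replacing `c_k` by some `d ∈ C_k \ V` keeps the choice independent, and
as `x ∈ V` but `d ∉ V`, the vector `d` can be eliminated: `x ∈ span {c_j : j ≠ k}`. Hence
`x ∈ Q`. A vector `b ∈ C_i \ Q` has a nonzero `c_t`-coordinate for some `t` with `C_t ⊄ V`;
replacing `c_t` by `d ∈ C_t \ V` and then `c_i` by `b` is again an independent choice, and
eliminating first `d` (outside `V`) and then `b` (outside `span {c_j : j ≠ t}`) gives
`x ∈ span {c_j : j ≠ i}`.
-/

open Set Submodule Function

theorem Set.image_update_of_mem {ι α : Type*} [DecidableEq ι] (v : ι → α) {k : ι} (d : α)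
    {s : Set ι} (hk : k ∈ s) : update v k d '' s = insert d (v '' (s \ {k})) := by
  rw [← insert_sdiff_self_of_mem hk, image_insert_eq, update_self, insert_sdiff_self_of_mem hk]
  congr 1
  refine image_congr fun j hj => update_of_ne ?_ d v
  simpa using hj.2

theorem Set.range_update {ι α : Type*} [DecidableEq ι] (v : ι → α) (k : ι) (d : α) :
    range (update v k d) = insert d (v '' {k}ᶜ) := by
  rw [← image_univ, image_update_of_mem v d (mem_univ k), ← compl_eq_univ_sdiff]

theorem LinearIndependent.mem_span_image_compl_of_forall {ι R M : Type*} [Semiring R]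
    [AddCommMonoid M] [Module R M] {v : ι → M} (hv : LinearIndependent R v) {S : Set ι} {x : M}
    (hx : x ∈ span R (range v)) (hS : ∀ k ∈ S, x ∈ span R (v '' {k}ᶜ)) :
    x ∈ span R (v '' Sᶜ) := by
  rw [← image_univ, Finsupp.mem_span_image_iff_linearCombination] at hx
  obtain ⟨ℓ, -, rfl⟩ := hx
  refine Finsupp.mem_span_image_iff_linearCombination R |>.mpr ⟨ℓ, fun k hk hkS => ?_, rfl⟩
  obtain ⟨ℓ', hℓ', he⟩ := Finsupp.mem_span_image_iff_linearCombination R |>.mp (hS k hkS)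
  rw [hv he] at hℓ'
  exact hℓ' hk rfl

section
variable {K E ι : Type*} [Field K] [AddCommGroup E] [Module K E]

theorem Submodule.mem_span_of_mem_span_insert_of_notMem {p : Submodule K E} {s : Set E}
    {d x : E} (hx : x ∈ span K (insert d s)) (hxp : x ∈ p) (hs : s ⊆ p) (hd : d ∉ p) :
    x ∈ span K s := by
  by_contra hxs
  exact hd (span_le.mpr (insert_subset hxp hs) (mem_span_insert_exchange hx hxs))

theorem Submodule.mem_span_image_compl_of_mem_span_range_update [DecidableEq ι]
    {p : Submodule K E} {v : ι → E} {k : ι} {d x : E}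
    (hxd : x ∈ span K (range (update v k d))) (hxp : x ∈ p)
    (hv : v '' {k}ᶜ ⊆ p) (hd : d ∉ p) : x ∈ span K (v '' {k}ᶜ) := by
  rw [range_update] at hxd
  exact mem_span_of_mem_span_insert_of_notMem hxd hxp hv hd

theorem LinearIndependent.update_of_notMem_span [DecidableEq ι] {v : ι → E}
    (hv : LinearIndependent K v) (k : ι) {d : E} (hd : d ∉ span K (v '' {k}ᶜ)) :
    LinearIndependent K (Function.update v k d) := by
  have heq : EqOn v (Function.update v k d) {k}ᶜ := fun j hj => (update_of_ne hj d v).symm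
  rw [← linearIndepOn_univ_iff, ← union_compl_self {k}, ← insert_eq,
    linearIndepOn_insert (by simp)]
  refine ⟨(hv.linearIndepOn _).congr heq, ?_⟩
  rwa [update_self, ← heq.image_eq]

end

section
variable {K E ι : Type*} [Field K] [AddCommGroup E] [Module K E] [DecidableEq ι]
  {C : ι → Set E} {x : E}

theorem mem_span_image_compl_of_swap
    (hx : ∀ e ∈ univ.pi C, LinearIndependent K e → x ∈ span K (range e))
    {v : ι → E} (hvC : v ∈ univ.pi C) (hv : LinearIndependent K v)
    {k : ι} {d : E} (hdC : d ∈ C k) (hd : d ∉ span K (range v)) :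
    x ∈ span K (v '' {k}ᶜ) :=
  mem_span_image_compl_of_mem_span_range_update
    (hx _ ((update_mem_pi_iff_of_mem hvC).mpr fun _ => hdC)
      (hv.update_of_notMem_span k fun h => hd (span_mono (image_subset_range _ _) h)))
    (hx v hvC hv) ((image_subset_range _ _).trans subset_span) hd

theorem mem_span_image_compl_of_double_swap
    (hx : ∀ e ∈ univ.pi C, LinearIndependent K e → x ∈ span K (range e))
    {v : ι → E} (hvC : v ∈ univ.pi C) (hv : LinearIndependent K v)
    {i t : ι} (hit : i ≠ t) {b d : E} (hbC : b ∈ C i) (hdC : d ∈ C t)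
    (hbv : b ∈ span K (range v)) (hbt : b ∉ span K (v '' {t}ᶜ)) (hd : d ∉ span K (range v)) :
    x ∈ span K (v '' {i}ᶜ) := by
  have hvV : ∀ s, v '' s ⊆ span K (range v) := fun s => (image_subset_range _ _).trans subset_span
  have hxt : x ∈ span K (v '' {t}ᶜ) := mem_span_image_compl_of_swap hx hvC hv hdC hd
  have hw : LinearIndependent K (update v t d) :=
    hv.update_of_notMem_span t fun h => hd (span_mono (image_subset_range _ _) h)
  have hbw : b ∉ span K (update v t d '' {i}ᶜ) := fun h => hbt <|
    mem_span_image_compl_of_mem_span_range_update (span_mono (image_subset_range _ _) h) hbv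
      (hvV _) hd
  have hxbd : x ∈ span K (range (update (update v i b) t d)) := by
    rw [update_comm hit]
    refine hx _ ?_ (hw.update_of_notMem_span i hbw)
    exact (update_mem_pi_iff_of_mem ((update_mem_pi_iff_of_mem hvC).mpr fun _ => hdC)).mpr
      fun _ => hbC
  have hxb : x ∈ span K (insert b (v '' ({t}ᶜ \ {i}))) := by
    rw [← image_update_of_mem v b (mem_compl_singleton_iff.mpr hit)]
    refine mem_span_image_compl_of_mem_span_range_update hxbd (hx v hvC hv) ?_ hd
    exact (image_subset_range _ _).trans (range_update v i b ▸ insert_subset hbv (hvV _))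
  exact span_mono (image_mono fun j hj => hj.2) <| mem_span_of_mem_span_insert_of_notMem hxb hxt
    ((image_mono sdiff_subset).trans subset_span) hbt
end

theorem stmt4_general {K E : Type*} [Field K] [AddCommGroup E] [Module K E]
    {m : ℕ} (C : Fin m → Finset E) (C' : Finset E)
    (c : Fin m → E) (hc : ∀ i, c i ∈ C i) (hindep : LinearIndependent K c)
    (hdeg : ∀ (d : Fin m → E), (∀ i, d i ∈ C i) → ∀ x ∈ C',
      ¬ LinearIndependent K (Fin.snoc d x : Fin (m + 1) → E))
    (l : ℕ)
    (hin : ∀ i : Fin m, (i : ℕ) < l →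
      (C i : Set E) ⊆ (Submodule.span K (Set.range c) : Set E))
    (hout : ∀ i : Fin m, l ≤ (i : ℕ) →
      ¬ ((C i : Set E) ⊆ (Submodule.span K (Set.range c) : Set E)))
    (i : Fin m) (hi : (i : ℕ) < l)
    (hCi : ¬ ((C i : Set E) ⊆
      (Submodule.span K (c '' {j : Fin m | (j : ℕ) < l}) : Set E))) :
    Submodule.span K (C' : Set E) ≤
      Submodule.span K (c '' {j : Fin m | (j : ℕ) < l ∧ j ≠ i}) := by
  have hcC : c ∈ univ.pi fun j => (C j : Set E) := mem_univ_pi.mpr hc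
  have hout' (k : Fin m) (hk : l ≤ (k : ℕ)) : ∃ d ∈ C k, d ∉ span K (range c) :=
    not_subset.mp (hout k hk)
  obtain ⟨b, hbC, hbQ⟩ := not_subset.mp hCi
  obtain ⟨t, ht, hbt⟩ : ∃ t : Fin m, l ≤ (t : ℕ) ∧ b ∉ span K (c '' {t}ᶜ) := by
    by_contra! h
    have hQ : {k : Fin m | l ≤ (k : ℕ)}ᶜ = {j : Fin m | (j : ℕ) < l} := by ext; simp
    exact hbQ (hQ ▸ hindep.mem_span_image_compl_of_forall (hin i hi hbC) h)
  obtain ⟨d, hdC, hd⟩ := hout' t ht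
  rw [span_le]
  intro x hx
  have hxe (e) (he : e ∈ univ.pi fun j => (C j : Set E)) (hei : LinearIndependent K e) :
      x ∈ span K (range e) := by
    by_contra hxe
    exact hdeg e (mem_univ_pi.mp he) x hx (linearIndependent_finSnoc.mpr ⟨hei, hxe⟩)
  have hcompl : {j : Fin m | (j : ℕ) < l ∧ j ≠ i} = {k : Fin m | l ≤ (k : ℕ) ∨ k = i}ᶜ := by
    ext; simp
  rw [hcompl]
  refine hindep.mem_span_image_compl_of_forall (hxe c hcC hindep) ?_
  rintro k (hk | rfl)
  · obtain ⟨d, hdC, hd⟩ := hout' k hk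
    exact mem_span_image_compl_of_swap hxe hcC hindep hdC hd
  · exact mem_span_image_compl_of_double_swap hxe hcC hindep (by rintro rfl; omega)
      hbC hdC (hin k hi hbC) hbt hd

/-- Lemma lmFin4: with `c₁ ∈ C₁, …, c_m ∈ C_m` linearly independent,
the augmented family `C₁, …, C_m, C` degenerate, `V = span {c₁, …, c_m}`,
`0 < l ≤ m`, `Cᵢ ⊆ V` for `i ≤ l` and `Cᵢ ⊄ V` for `i > l` (0-indexed: `i < l`
resp. `l ≤ i`), and `Q = span {c₁, …, c_l}`: if for some `i ≤ l` the set `Cᵢ ⊄ Q`,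
then the span of `C` is contained in `Qᵢ = span {c₁, …, c_{i-1}, c_{i+1}, …, c_l}`. -/
theorem stmt4 {K E : Type*} [Field K] [AddCommGroup E] [Module K E]
    {m : ℕ} (C : Fin m → Finset E) (C' : Finset E)
    (hC : ∀ i, (C i).Nonempty) (hC' : C'.Nonempty)
    (c : Fin m → E) (hc : ∀ i, c i ∈ C i) (hindep : LinearIndependent K c)
    (hdeg : ∀ (d : Fin m → E), (∀ i, d i ∈ C i) → ∀ x ∈ C',
      ¬ LinearIndependent K (Fin.snoc d x : Fin (m + 1) → E))
    (l : ℕ) (hl0 : 0 < l) (hlm : l ≤ m)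
    (hin : ∀ i : Fin m, (i : ℕ) < l →
      (C i : Set E) ⊆ (Submodule.span K (Set.range c) : Set E))
    (hout : ∀ i : Fin m, l ≤ (i : ℕ) →
      ¬ ((C i : Set E) ⊆ (Submodule.span K (Set.range c) : Set E)))
    (i : Fin m) (hi : (i : ℕ) < l)
    (hCi : ¬ ((C i : Set E) ⊆
      (Submodule.span K (c '' {j : Fin m | (j : ℕ) < l}) : Set E))) :
    Submodule.span K (C' : Set E) ≤
      Submodule.span K (c '' {j : Fin m | (j : ℕ) < l ∧ j ≠ i}) :=
  stmt4_general C C' c hc hindep hdeg l hin hout i hi hCi
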